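/- arXiv:0712.2800 — 6 statements merged into one kernel-verified Lean document; each statement's English description precedes it below -/
import Mathlib

section
/- Let U : ℝ → ℝ^N be a C² solution of U'' - ∇W(U) = -c U' on (μ, ν), with c > 0. Then the weighted action satisfies ∫_μ^ν {½|U'(x)|² + W(U(x))} e^{cx} dx = [(e^{cx}/c)(W(U(x)) - |U'(x)|²/2)]_{x=μ}^{x=ν}. -/
open MeasureTheory Real Filter
open scoped Topology RealInnerProductSpace

/-!
Along a solution of `U'' = ∇W(U) - c U'` one has `(W(U))' = ⟪∇W(U), U'⟫` and
`(‖U'‖²/2)' = ⟪U'', U'⟫ = ⟪∇W(U), U'⟫ - c‖U'‖²`, so `(W(U) - ‖U'‖²/2)' = c‖U'‖²`. Hence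
`(e^{cx}/c · (W(U) - ‖U'‖²/2))' = e^{cx} (W(U) - ‖U'‖²/2) + e^{cx} ‖U'‖² = e^{cx} (½‖U'‖² + W(U))`,
and the identity is the fundamental theorem of calculus.
-/

section

variable {E : Type*} [NormedAddCommGroup E] [InnerProductSpace ℝ E] [CompleteSpace E]

theorem HasGradientAt.comp_hasDerivAt {W : E → ℝ} {g : E} {U : ℝ → E} {v : E} {x : ℝ}
    (hW : HasGradientAt W g (U x)) (hU : HasDerivAt U v x) :
    HasDerivAt (fun t => W (U t)) ⟪g, v⟫ x :=
  (hW.hasFDerivAt.comp_hasDerivAt x hU).congr_deriv (by simp)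

theorem hasDerivAt_exp_mul_div_const {c : ℝ} (hc : c ≠ 0) (x : ℝ) :
    HasDerivAt (fun t => exp (c * t) / c) (exp (c * x)) x := by
  have h := (((hasDerivAt_id x).const_mul c).exp).div_const c
  simpa [mul_div_assoc, mul_div_cancel_right₀ _ hc] using h

theorem hasDerivAt_weightedEnergy {W : E → ℝ} {U V : ℝ → E} {g a : E} {c x : ℝ} (hc : c ≠ 0)
    (hU : HasDerivAt U (V x) x) (hV : HasDerivAt V a x) (hW : HasGradientAt W g (U x))
    (hODE : a = g - c • V x) :
    HasDerivAt (fun t => exp (c * t) / c * (W (U t) - ‖V t‖ ^ 2 / 2))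
      ((1 / 2 * ‖V x‖ ^ 2 + W (U x)) * exp (c * x)) x := by
  have hEnergy : HasDerivAt (fun t => W (U t) - ‖V t‖ ^ 2 / 2) (c * ‖V x‖ ^ 2) x := by
    refine ((hW.comp_hasDerivAt hU).sub (hV.norm_sq.div_const 2)).congr_deriv ?_
    rw [hODE, inner_sub_right, inner_smul_right, real_inner_self_eq_norm_sq, real_inner_comm]
    ring
  refine ((hasDerivAt_exp_mul_div_const hc x).mul hEnergy).congr_deriv ?_
  field_simp
  ring

end

/-- First weighted energy integral for a C² solution of
`U'' - ∇W(U) = -c U'` with `c > 0`: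
`∫_μ^ν (½‖U'‖² + W(U)) e^{cx} dx = [(e^{cx}/c)(W(U) - ‖U'‖²/2)]_μ^ν`. -/
theorem stmt2 {E : Type*} [NormedAddCommGroup E] [InnerProductSpace ℝ E]
    [FiniteDimensional ℝ E]
    (W : E → ℝ) (hW : ContDiff ℝ 2 W) (c : ℝ) (hc : 0 < c)
    (μ ν : ℝ) (hμν : μ < ν)
    (U : ℝ → E) (hU : ContDiff ℝ 2 U)
    (hODE : ∀ x ∈ Set.Icc μ ν,
      deriv (deriv U) x - gradient W (U x) = -c • deriv U x) :
    ∫ x in μ..ν, (1 / 2 * ‖deriv U x‖ ^ 2 + W (U x)) * exp (c * x) =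
      exp (c * ν) / c * (W (U ν) - ‖deriv U ν‖ ^ 2 / 2) -
        exp (c * μ) / c * (W (U μ) - ‖deriv U μ‖ ^ 2 / 2) := by
  have hU' : ContDiff ℝ 1 (deriv U) := hU.deriv' (n := 1)
  have hW' : Differentiable ℝ W := hW.differentiable two_ne_zero
  have hderiv : ∀ x ∈ Set.uIcc μ ν,
      HasDerivAt (fun x => exp (c * x) / c * (W (U x) - ‖deriv U x‖ ^ 2 / 2))
        ((1 / 2 * ‖deriv U x‖ ^ 2 + W (U x)) * exp (c * x)) x := by
    intro x hx
    rw [Set.uIcc_of_le hμν.le] at hx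
    refine hasDerivAt_weightedEnergy hc.ne' ((hU.differentiable two_ne_zero) x).hasDerivAt
      ((hU'.differentiable one_ne_zero) x).hasDerivAt (hW' (U x)).hasGradientAt ?_
    linear_combination (norm := module) hODE x hx
  have hcont : Continuous fun x => (1 / 2 * ‖deriv U x‖ ^ 2 + W (U x)) * exp (c * x) := by
    have hU'_cont := hU'.continuous
    fun_prop
  rw [intervalIntegral.integral_eq_sub_of_hasDerivAt hderiv (hcont.intervalIntegrable μ ν)]
end

section
/- Let W : ℝ^N → ℝ be C¹ with a⁻ its only critical point in the closed ball B̄(a⁻, r₀), and suppose r ↦ W(a⁻ + rξ) is strictly increasing in r for 0 < r ≤ r₀, all unit ξ. Let U be a bounded C² solution of U'' - ∇W(U) = -c U' (c > 0) on (-∞, x₀) with |U(x) - a⁻| ≤ r₀ for all x ≤ x₀, such that ρ(x) := |U(x) - a⁻| is eventually monotone. Then U(x) → a⁻ as x → -∞. -/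
/-!
Write `u = U - a⁻`, `V = U'` and `p = ⟪u, V⟫ = (‖u‖² / 2)'`. Radial monotonicity of `W` gives
`⟪u, ∇W(U)⟫ ≥ 0`, so the equation yields `p' + c p = ‖V‖² + ⟪u, ∇W(U)⟫ ≥ ‖V‖²`. Hence
`e^{cx} p` is nondecreasing; were `p` negative somewhere, `‖u‖²` would grow linearly towards
`-∞`, so `p ≥ 0` and `ρ = ‖u‖` is nondecreasing. As `q = p + c‖u‖²/2 ≥ 0` has `q' ≥ ‖V‖²`,
`V` is square integrable near `-∞`. On a window far to the left `U` therefore barely moves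
and `V` is small at two points `s < t` with `t - s ≥ 1`; integrating `(V + cU)' = ∇W(U)` over
`[s, t]` makes `‖∇W(U(s))‖` small. Since `a⁻` is the only critical point in the compact ball,
`U(s)` comes arbitrarily close to `a⁻`, and the monotonicity of `ρ` gives convergence.
-/

open MeasureTheory Real Filter Set
open scoped Topology RealInnerProductSpace

theorem inner_sub_gradient_nonneg {E : Type*} [NormedAddCommGroup E] [InnerProductSpace ℝ E]
    [CompleteSpace E] {W : E → ℝ} {a u : E} {r₀ : ℝ} (hW : DifferentiableAt ℝ W u)
    (hmono : ∀ ξ : E, ‖ξ‖ = 1 → StrictMonoOn (fun r : ℝ => W (a + r • ξ)) (Icc 0 r₀))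
    (hu : ‖u - a‖ ≤ r₀) : 0 ≤ ⟪u - a, gradient W u⟫ := by
  rcases eq_or_ne u a with rfl | hne
  · simp
  set r := ‖u - a‖
  have hr : 0 < r := norm_pos_iff.2 (sub_ne_zero.2 hne)
  set ξ := r⁻¹ • (u - a)
  have hξ : ‖ξ‖ = 1 := by rw [norm_smul, norm_inv, norm_norm, inv_mul_cancel₀ hr.ne']
  have hu_eq : u - a = r • ξ := by simp [ξ, smul_smul, hr.ne']
  have hline : HasDerivAt (fun s : ℝ => W (a + s • ξ)) ⟪gradient W u, ξ⟫ r := by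
    have hpt : a + r • ξ = u := by rw [← hu_eq]; abel
    have hW' : DifferentiableAt ℝ W (a + r • ξ) := hpt ▸ hW
    have := hW'.hasFDerivAt.comp_hasDerivAt r (((hasDerivAt_id r).smul_const ξ).const_add a)
    rw [one_smul, hpt, hW.hasGradientAt.fderiv_apply] at this
    exact this
  have hacc : AccPt r (𝓟 (Ioo 0 r)) := by
    rw [accPt_principal_iff_nhdsWithin, sdiff_singleton_eq_self (fun h => h.2.false)]
    exact right_nhdsWithin_Ioo_neBot hr
  have hderiv := hline.hasDerivWithinAt.nonneg_of_monotoneOn hacc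
    ((hmono ξ hξ).monotoneOn.mono fun s hs => ⟨hs.1.le, hs.2.le.trans hu⟩)
  rw [hu_eq, real_inner_smul_left, real_inner_comm]
  exact mul_nonneg hr.le hderiv

theorem nonneg_of_hasDerivAt_add_mul_nonneg {φ p p' : ℝ → ℝ} {c x₀ : ℝ} (hc : 0 ≤ c)
    (hφ : ∀ x < x₀, HasDerivAt φ (p x) x) (hp : ∀ x < x₀, HasDerivAt p (p' x) x)
    (hpp' : ∀ x < x₀, 0 ≤ p' x + c * p x) (hbdd : BddAbove (φ '' Iio x₀)) :
    ∀ x < x₀, 0 ≤ p x := by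
  have hψ : MonotoneOn (fun x => exp (c * x) * p x) (Iio x₀) := by
    have hd : ∀ x < x₀, HasDerivAt (fun x => exp (c * x) * p x)
        (exp (c * x) * (p' x + c * p x)) x := fun x hx => by
      refine ((((hasDerivAt_id' x).const_mul c).exp).mul (hp x hx)).congr_deriv ?_
      ring
    refine monotoneOn_of_hasDerivWithinAt_nonneg (f' := fun x => exp (c * x) * (p' x + c * p x))
      (convex_Iio x₀)
      (fun x hx => (hd x hx).continuousAt.continuousWithinAt) (fun x hx => ?_) (fun x hx => ?_)
    · rw [interior_Iio] at hx ⊢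
      exact (hd x hx).hasDerivWithinAt
    · rw [interior_Iio] at hx
      exact mul_nonneg (exp_pos _).le (hpp' x hx)
  intro x hx
  by_contra! hpx
  have hle : ∀ t ≤ x, p t ≤ p x := by
    intro t htx
    have h1 := hψ (htx.trans_lt hx) hx htx
    have h2 : exp (c * x) * p x ≤ exp (c * t) * p x :=
      mul_le_mul_of_nonpos_right (exp_le_exp.2 (by nlinarith)) hpx.le
    exact le_of_mul_le_mul_left (h1.trans h2) (exp_pos _)
  have hlow : ∀ y < x, φ x - p x * (x - y) ≤ φ y := by
    intro y hyx
    obtain ⟨ξ, hξ, hslope⟩ := exists_hasDerivAt_eq_slope φ p hyx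
      (fun t ht => (hφ t (ht.2.trans_lt hx)).continuousAt.continuousWithinAt)
      (fun t ht => hφ t (ht.2.trans hx))
    have := hle ξ hξ.2.le
    rw [hslope, div_le_iff₀ (sub_pos.2 hyx)] at this
    linarith
  have hunbdd : Tendsto (fun y => φ x - p x * (x - y)) atBot atTop := by
    have := tendsto_atTop_add_const_left _ (φ x - p x * x) (tendsto_id.const_mul_atBot_of_neg hpx)
    exact this.congr fun y => by simp only [id]; ring
  obtain ⟨M, hM⟩ := hbdd
  obtain ⟨y, hyM, hyx⟩ := ((hunbdd.eventually_gt_atTop M).and (eventually_lt_atBot x)).exists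
  exact (hyM.trans_le (hlow y hyx)).not_ge (hM ⟨y, hyx.trans hx, rfl⟩)

theorem integrableOn_Iic_of_le_hasDerivAt {f q q' : ℝ → ℝ} {b : ℝ} (hf : Continuous f)
    (hf₀ : ∀ x ≤ b, 0 ≤ f x) (hq : ∀ x ≤ b, HasDerivAt q (q' x) x) (hfq : ∀ x ≤ b, f x ≤ q' x)
    (hq₀ : ∀ x ≤ b, 0 ≤ q x) : IntegrableOn f (Iic b) := by
  refine integrableOn_Iic_of_intervalIntegral_norm_bounded (q b) b
    (a := id) (fun _ => hf.integrableOn_Ioc) tendsto_id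
    ((eventually_le_atBot b).mono fun y hy => ?_)
  have hFTC : ∫ x in y..b, ‖f x‖ ≤ q b - q y :=
    intervalIntegral.integral_le_sub_of_hasDeriv_right_of_le hy
      (fun x hx => (hq x hx.2).continuousAt.continuousWithinAt)
      (fun x hx => (hq x hx.2.le).hasDerivWithinAt) hf.norm.integrableOn_Icc
      (fun x hx => by rw [Real.norm_of_nonneg (hf₀ x hx.2.le)]; exact hfq x hx.2.le)
  show ∫ x in y..b, ‖f x‖ ≤ q b
  linarith [hq₀ y hy]

theorem MeasureTheory.IntegrableOn.tendsto_intervalIntegral_add_atBot {f : ℝ → ℝ} {b : ℝ}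
    (hf : IntegrableOn f (Iic b)) (L : ℝ) :
    Tendsto (fun y => ∫ x in y..y + L, f x) atBot (𝓝 0) := by
  have hlim := intervalIntegral_tendsto_integral_Iic b hf tendsto_id
  have hshift := hlim.comp (tendsto_atBot_add_const_right _ L tendsto_id)
  rw [← sub_self (∫ x in Iic b, f x)]
  refine (hlim.sub hshift).congr' ?_
  filter_upwards [eventually_le_atBot (b - L), eventually_le_atBot b] with y hyL hyb
  have hint : ∀ u v, u ≤ b → v ≤ b → IntervalIntegrable f volume u v := fun u v hu hv =>
    (hf.mono_set fun x hx => hx.2.trans (max_le hu hv)).intervalIntegrable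
  show (∫ x in y..b, f x) - ∫ x in y + L..b, f x = ∫ x in y..y + L, f x
  rw [← intervalIntegral.integral_add_adjacent_intervals (hint y (y + L) hyb (by linarith))
    (hint (y + L) b (by linarith) le_rfl), add_sub_cancel_right]

theorem exists_mem_Icc_mul_le_intervalIntegral {f : ℝ → ℝ} (hf : Continuous f) {a b : ℝ}
    (hab : a ≤ b) : ∃ s ∈ Icc a b, (b - a) * f s ≤ ∫ x in a..b, f x := by
  obtain ⟨s, hs, hmin⟩ := isCompact_Icc.exists_isMinOn (nonempty_Icc.2 hab) hf.continuousOn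
  refine ⟨s, hs, ?_⟩
  have := intervalIntegral.integral_mono_on hab (intervalIntegrable_const (μ := volume) (c := f s))
    (hf.intervalIntegrable a b) fun x hx => hmin hx
  rwa [intervalIntegral.integral_const, smul_eq_mul] at this

section

variable {E : Type*} [NormedAddCommGroup E] [NormedSpace ℝ E] [CompleteSpace E]

theorem norm_sub_le_intervalIntegral_norm_sq {U V : ℝ → E} (hU : ∀ x, HasDerivAt U (V x) x)
    (hV : Continuous V) {s t θ : ℝ} (hθ : 0 < θ) (hst : s ≤ t) :
    ‖U t - U s‖ ≤ (∫ x in s..t, ‖V x‖ ^ 2) / (2 * θ) + (t - s) * θ / 2 := by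
  have hamgm : ∀ x, ‖V x‖ ≤ ‖V x‖ ^ 2 / (2 * θ) + θ / 2 := fun x => by
    rw [div_add_div _ _ (by positivity) two_ne_zero, le_div_iff₀ (by positivity)]
    nlinarith [sq_nonneg (‖V x‖ - θ)]
  have hsq : Continuous fun x => ‖V x‖ ^ 2 := hV.norm.pow 2
  calc ‖U t - U s‖ = ‖∫ x in s..t, V x‖ := by
        rw [intervalIntegral.integral_eq_sub_of_hasDerivAt (fun x _ => hU x)
          (hV.intervalIntegrable s t)]
    _ ≤ ∫ x in s..t, ‖V x‖ := intervalIntegral.norm_integral_le_integral_norm hst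
    _ ≤ ∫ x in s..t, (‖V x‖ ^ 2 / (2 * θ) + θ / 2) :=
        intervalIntegral.integral_mono_on hst (hV.norm.intervalIntegrable s t)
          ((hsq.div_const _).add continuous_const |>.intervalIntegrable s t) fun x _ => hamgm x
    _ = (∫ x in s..t, ‖V x‖ ^ 2) / (2 * θ) + (t - s) * θ / 2 := by
        rw [intervalIntegral.integral_add ((hsq.div_const _).intervalIntegrable s t)
          intervalIntegrable_const, intervalIntegral.integral_div,
          intervalIntegral.integral_const, smul_eq_mul, mul_div_assoc]

theorem norm_le_of_norm_intervalIntegral_le {F : ℝ → E} (hF : Continuous F) {s t A B : ℝ}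
    (hst : 1 ≤ t - s) (hA : ‖∫ τ in s..t, F τ‖ ≤ A) (hB : ∀ τ ∈ Icc s t, ‖F τ - F s‖ ≤ B) :
    ‖F s‖ ≤ A + B := by
  have hsplit : (t - s) • F s = (∫ τ in s..t, F τ) - ∫ τ in s..t, (F τ - F s) := by
    rw [intervalIntegral.integral_sub (hF.intervalIntegrable s t) intervalIntegrable_const,
      intervalIntegral.integral_const, sub_sub_cancel]
  have hdev : ‖∫ τ in s..t, (F τ - F s)‖ ≤ B * |t - s| :=
    intervalIntegral.norm_integral_le_of_norm_le_const fun τ hτ => by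
      rw [uIoc_of_le (by linarith)] at hτ
      exact hB τ (Ioc_subset_Icc_self hτ)
  have hmain : (t - s) * ‖F s‖ ≤ A + B * (t - s) := by
    rw [← abs_of_pos (by linarith : 0 < t - s), ← Real.norm_eq_abs, ← norm_smul, hsplit]
    exact (norm_sub_le _ _).trans (add_le_add hA hdev)
  have hA₀ : 0 ≤ A := (norm_nonneg _).trans hA
  nlinarith

theorem exists_norm_velocity_le_of_intervalIntegral_le {U V : ℝ → E}
    (hU : ∀ x, HasDerivAt U (V x) x) (hV : Continuous V) {θ y : ℝ} (hθ : 0 < θ)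
    (hwin : ∫ x in y..y + 3, ‖V x‖ ^ 2 ≤ θ ^ 2) :
    ∃ s t, y ≤ s ∧ s + 1 ≤ t ∧ t ≤ y + 3 ∧ ‖V s‖ ≤ θ ∧ ‖V t‖ ≤ θ ∧
      ∀ τ ∈ Icc s t, ‖U τ - U s‖ ≤ 2 * θ := by
  have hsq : Continuous fun x => ‖V x‖ ^ 2 := hV.norm.pow 2
  have hsub : ∀ u v, y ≤ u → u ≤ v → v ≤ y + 3 → ∫ x in u..v, ‖V x‖ ^ 2 ≤ θ ^ 2 :=
    fun u v hu huv hv => (intervalIntegral.integral_mono_interval hu huv hv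
      (Eventually.of_forall fun x => by positivity) (hsq.intervalIntegrable _ _)).trans hwin
  have hsmall : ∀ u, y ≤ u → u + 1 ≤ y + 3 → ∃ s ∈ Icc u (u + 1), ‖V s‖ ≤ θ := by
    intro u hu hu'
    obtain ⟨s, hs, hle⟩ := exists_mem_Icc_mul_le_intervalIntegral hsq (by linarith : u ≤ u + 1)
    refine ⟨s, hs, (pow_le_pow_iff_left₀ (norm_nonneg _) hθ.le two_ne_zero).1 ?_⟩
    rw [add_sub_cancel_left, one_mul] at hle
    exact hle.trans (hsub u (u + 1) hu (by linarith) hu')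
  obtain ⟨s, hs, hVs⟩ := hsmall y le_rfl (by linarith)
  obtain ⟨t, ht, hVt⟩ := hsmall (y + 2) (by linarith) (by linarith)
  refine ⟨s, t, hs.1, by linarith [hs.2, ht.1], by linarith [ht.2], hVs, hVt, fun τ hτ => ?_⟩
  have hθ2 : θ ^ 2 / (2 * θ) = θ / 2 := by field_simp
  calc ‖U τ - U s‖ ≤ (∫ x in s..τ, ‖V x‖ ^ 2) / (2 * θ) + (τ - s) * θ / 2 :=
        norm_sub_le_intervalIntegral_norm_sq hU hV hθ hτ.1
    _ ≤ θ ^ 2 / (2 * θ) + 3 * θ / 2 := by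
        gcongr
        · exact hsub s τ hs.1 hτ.1 (by linarith [hτ.2, ht.2])
        · linarith [hτ.2, ht.2, hs.1]
    _ = 2 * θ := by rw [hθ2]; ring

theorem exists_lt_norm_comp_le {g : E → E} {U V : ℝ → E} {c x₀ b : ℝ} {K : Set E}
    (hK : IsCompact K) (hg : Continuous g) (hc : 0 ≤ c) (hU : ∀ x, HasDerivAt U (V x) x)
    (hVc : Continuous V) (hV : ∀ x < x₀, HasDerivAt V (g (U x) - c • V x) x)
    (hUK : ∀ x < x₀, U x ∈ K) (hVint : IntegrableOn (fun x => ‖V x‖ ^ 2) (Iic b)) :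
    ∀ ε > 0, ∃ z < x₀, ‖g (U z)‖ ≤ ε := by
  intro ε hε
  obtain ⟨δ, hδ, hgδ⟩ := Metric.uniformContinuousOn_iff.1
    (hK.uniformContinuousOn_of_continuous hg.continuousOn) (ε / 2) (by positivity)
  -- `θ ≤ δ / 3` keeps `U` within `δ` of `U s` on `[s, t]`, and `θ ≤ ε / (4 (1 + c))` makes the
  -- boundary terms `V t - V s + c (U t - U s)` at most `ε / 2`.
  set θ := min (δ / 3) (ε / (4 * (1 + c)))
  have hθ : 0 < θ := by positivity
  obtain ⟨y, hwin, hy⟩ := (((hVint.tendsto_intervalIntegral_add_atBot 3).eventually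
    (ge_mem_nhds (by positivity : (0 : ℝ) < θ ^ 2))).and (eventually_lt_atBot (x₀ - 3))).exists
  obtain ⟨s, t, hys, hst, hty, hVs, hVt, hmove⟩ :=
    exists_norm_velocity_le_of_intervalIntegral_le hU hVc hθ hwin
  have hgU : Continuous fun τ => g (U τ) :=
    hg.comp (continuous_iff_continuousAt.2 fun x => (hU x).continuousAt)
  have hFTC : ∫ τ in s..t, g (U τ) = (V t - V s) + c • (U t - U s) := by
    rw [intervalIntegral.integral_eq_sub_of_hasDerivAt (f := fun τ => V τ + c • U τ)
      (fun τ hτ => ?_) (hgU.intervalIntegrable s t)]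
    · simp only [smul_sub]; abel
    · rw [uIcc_of_le (by linarith)] at hτ
      exact ((hV τ (by linarith [hτ.2])).add ((hU τ).const_smul c)).congr_deriv (by abel)
  have hA : ‖∫ τ in s..t, g (U τ)‖ ≤ 2 * θ + c * (2 * θ) :=
    calc ‖∫ τ in s..t, g (U τ)‖ ≤ ‖V t‖ + ‖V s‖ + c * ‖U t - U s‖ := by
          rw [hFTC]
          refine (norm_add_le _ _).trans ?_
          rw [norm_smul, Real.norm_of_nonneg hc]
          gcongr
          exact norm_sub_le _ _
      _ ≤ 2 * θ + c * (2 * θ) := by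
          have := hmove t ⟨by linarith, le_rfl⟩
          gcongr; linarith
  have hB : ∀ τ ∈ Icc s t, ‖g (U τ) - g (U s)‖ ≤ ε / 2 := fun τ hτ => by
    rw [← dist_eq_norm]
    refine (hgδ _ (hUK τ (by linarith [hτ.2])) _ (hUK s (by linarith)) ?_).le
    rw [dist_eq_norm]
    linarith [hmove τ hτ, min_le_left (δ / 3) (ε / (4 * (1 + c)))]
  refine ⟨s, by linarith, (norm_le_of_norm_intervalIntegral_le hgU (by linarith) hA hB).trans ?_⟩
  have hθε : θ ≤ ε / (4 * (1 + c)) := min_le_right _ _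
  rw [le_div_iff₀ (by positivity)] at hθε
  linarith

end

section

variable {E : Type*} [NormedAddCommGroup E] [InnerProductSpace ℝ E]
  {g : E → E} {U V : ℝ → E} {a : E} {c x₀ : ℝ}

theorem hasDerivAt_half_norm_sub_sq {x : ℝ} (hU : HasDerivAt U (V x) x) :
    HasDerivAt (fun t => ‖U t - a‖ ^ 2 / 2) ⟪U x - a, V x⟫ x := by
  refine (((hU.sub_const a).norm_sq).div_const 2).congr_deriv ?_
  ring

theorem hasDerivAt_inner_sub_velocity {x : ℝ} (hU : HasDerivAt U (V x) x)
    (hV : HasDerivAt V (g (U x) - c • V x) x) :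
    HasDerivAt (fun t => ⟪U t - a, V t⟫)
      (‖V x‖ ^ 2 + ⟪U x - a, g (U x)⟫ - c * ⟪U x - a, V x⟫) x := by
  refine ((hU.sub_const a).inner ℝ hV).congr_deriv ?_
  rw [inner_sub_right, real_inner_smul_right, real_inner_self_eq_norm_sq]
  ring

theorem inner_sub_velocity_nonneg (hc : 0 ≤ c) (hU : ∀ x, HasDerivAt U (V x) x)
    (hV : ∀ x < x₀, HasDerivAt V (g (U x) - c • V x) x)
    (hrad : ∀ x < x₀, 0 ≤ ⟪U x - a, g (U x)⟫) {R : ℝ} (hR : ∀ x < x₀, ‖U x - a‖ ≤ R) :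
    ∀ x < x₀, 0 ≤ ⟪U x - a, V x⟫ := by
  refine nonneg_of_hasDerivAt_add_mul_nonneg hc (fun x _ => hasDerivAt_half_norm_sub_sq (hU x))
    (fun x hx => hasDerivAt_inner_sub_velocity (hU x) (hV x hx)) (fun x hx => ?_)
    ⟨R ^ 2 / 2, ?_⟩
  · nlinarith [hrad x hx, sq_nonneg ‖V x‖]
  · rintro _ ⟨x, hx, rfl⟩
    dsimp only
    nlinarith [hR x hx, norm_nonneg (U x - a)]

theorem monotoneOn_norm_sub_of_inner_nonneg (hU : ∀ x, HasDerivAt U (V x) x)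
    (hUV : ∀ x < x₀, 0 ≤ ⟪U x - a, V x⟫) : MonotoneOn (fun x => ‖U x - a‖) (Iio x₀) := by
  have hsq : MonotoneOn (fun x => ‖U x - a‖ ^ 2 / 2) (Iio x₀) := by
    refine monotoneOn_of_hasDerivWithinAt_nonneg (convex_Iio x₀)
      (fun x _ => (hasDerivAt_half_norm_sub_sq (a := a) (hU x)).continuousAt.continuousWithinAt)
      (fun x _ => (hasDerivAt_half_norm_sub_sq (hU x)).hasDerivWithinAt) fun x hx => ?_
    rw [interior_Iio] at hx
    exact hUV x hx
  intro x hx y hy hxy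
  have := hsq hx hy hxy
  dsimp only at this ⊢
  exact (pow_le_pow_iff_left₀ (norm_nonneg _) (norm_nonneg _) two_ne_zero).1 (by linarith)

theorem integrableOn_norm_velocity_sq (hc : 0 ≤ c) (hU : ∀ x, HasDerivAt U (V x) x)
    (hVc : Continuous V) (hV : ∀ x < x₀, HasDerivAt V (g (U x) - c • V x) x)
    (hrad : ∀ x < x₀, 0 ≤ ⟪U x - a, g (U x)⟫) (hUV : ∀ x < x₀, 0 ≤ ⟪U x - a, V x⟫) {b : ℝ}
    (hb : b < x₀) : IntegrableOn (fun x => ‖V x‖ ^ 2) (Iic b) := by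
  refine integrableOn_Iic_of_le_hasDerivAt (q := fun x => ⟪U x - a, V x⟫ + c * (‖U x - a‖ ^ 2 / 2))
    (hVc.norm.pow 2) (fun x _ => by positivity)
    (fun x hx => (hasDerivAt_inner_sub_velocity (hU x) (hV x (hx.trans_lt hb))).add
      ((hasDerivAt_half_norm_sub_sq (hU x)).const_mul c)) (fun x hx => ?_) (fun x hx => ?_)
  · linarith [hrad x (hx.trans_lt hb)]
  · have := hUV x (hx.trans_lt hb)
    positivity

end

section

variable {X F : Type*} [PseudoMetricSpace X] [NormedAddCommGroup F]

theorem exists_lt_dist_lt_of_forall_exists_norm_le {g : X → F} {U : ℝ → X} {a : X} {x₀ : ℝ}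
    {K : Set X} (hK : IsCompact K) (hg : ContinuousOn g K) (hcrit : ∀ u ∈ K, g u = 0 → u = a)
    (hUK : ∀ x < x₀, U x ∈ K) (hsmall : ∀ ε > 0, ∃ z < x₀, ‖g (U z)‖ ≤ ε) :
    ∀ ε > 0, ∃ z < x₀, dist (U z) a < ε := by
  intro ε hε
  by_contra! hfar
  have hK' : IsCompact (K ∩ {u | ε ≤ dist u a}) :=
    hK.inter_right (isClosed_le continuous_const (continuous_id.dist continuous_const))
  obtain ⟨u₀, hu₀, hmin⟩ := hK'.exists_isMinOn
    ⟨U (x₀ - 1), hUK _ (sub_one_lt x₀), hfar _ (sub_one_lt x₀)⟩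
    (hg.norm.mono inter_subset_left)
  have hpos : 0 < ‖g u₀‖ := norm_pos_iff.2 fun h0 => by
    have hfar₀ : ε ≤ dist u₀ a := hu₀.2
    rw [hcrit u₀ hu₀.1 h0, dist_self] at hfar₀
    linarith
  obtain ⟨z, hz, hgz⟩ := hsmall (‖g u₀‖ / 2) (by positivity)
  have : ‖g u₀‖ ≤ ‖g (U z)‖ := hmin ⟨hUK z hz, hfar z hz⟩
  linarith

theorem tendsto_atBot_of_monotoneOn_dist {U : ℝ → X} {a : X} {x₀ : ℝ}
    (hmono : MonotoneOn (fun x => dist (U x) a) (Iio x₀))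
    (hnear : ∀ ε > 0, ∃ z < x₀, dist (U z) a < ε) : Tendsto U atBot (𝓝 a) :=
  Metric.tendsto_nhds.2 fun ε hε =>
    let ⟨z, hz, hlt⟩ := hnear ε hε
    eventually_atBot.2 ⟨z, fun _ hx => (hmono (hx.trans_lt hz) hz hx).trans_lt hlt⟩

end

theorem stmt8_general {E : Type*} [NormedAddCommGroup E] [InnerProductSpace ℝ E]
    [FiniteDimensional ℝ E]
    (W : E → ℝ) (hW : ContDiff ℝ 1 W) (aminus : E) (r₀ c x₀ : ℝ)
    (hc : 0 < c)
    (hcrit : ∀ u : E, ‖u - aminus‖ ≤ r₀ → gradient W u = 0 → u = aminus)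
    (hmono : ∀ ξ : E, ‖ξ‖ = 1 →
      StrictMonoOn (fun r : ℝ => W (aminus + r • ξ)) (Set.Icc 0 r₀))
    (U : ℝ → E) (hU : ContDiff ℝ 2 U)
    (hODE : ∀ x < x₀, deriv (deriv U) x - gradient W (U x) = -c • deriv U x)
    (hball : ∀ x ≤ x₀, ‖U x - aminus‖ ≤ r₀) :
    Tendsto U atBot (𝓝 aminus) := by
  have hgrad : Continuous (gradient W) :=
    (InnerProductSpace.toDual ℝ E).symm.continuous.comp (hW.continuous_fderiv one_ne_zero)
  have hU' : ∀ x, HasDerivAt U (deriv U x) x := fun x =>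
    (hU.differentiable two_ne_zero x).hasDerivAt
  have hV : ∀ x < x₀, HasDerivAt (deriv U) (gradient W (U x) - c • deriv U x) x := fun x hx =>
    (hU.differentiable_deriv_two x).hasDerivAt.congr_deriv
      (by rw [sub_eq_add_neg, ← neg_smul, ← hODE x hx]; abel)
  have hrad : ∀ x < x₀, 0 ≤ ⟪U x - aminus, gradient W (U x)⟫ := fun x hx =>
    inner_sub_gradient_nonneg (hW.differentiable one_ne_zero _) hmono (hball x hx.le)
  have hUV := inner_sub_velocity_nonneg hc.le hU' hV hrad fun x hx => hball x hx.le
  have hK : ∀ x < x₀, U x ∈ Metric.closedBall aminus r₀ := fun x hx =>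
    mem_closedBall_iff_norm.2 (hball x hx.le)
  have hVc : Continuous (deriv U) := hU.continuous_deriv one_le_two
  refine tendsto_atBot_of_monotoneOn_dist
    (by simpa only [dist_eq_norm] using monotoneOn_norm_sub_of_inner_nonneg hU' hUV)
    (exists_lt_dist_lt_of_forall_exists_norm_le (isCompact_closedBall aminus r₀)
      hgrad.continuousOn (fun u hu => hcrit u (mem_closedBall_iff_norm.1 hu)) hK ?_)
  exact exists_lt_norm_comp_le (isCompact_closedBall aminus r₀) hgrad hc.le hU' hVc hV hK
    (integrableOn_norm_velocity_sq hc.le hU' hVc hV hrad hUV (sub_one_lt x₀))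

/-- Asymptotic convergence at `-∞`. If `a⁻` is the only critical point of
`W` in `B̄(a⁻,r₀)`, `r ↦ W(a⁻ + rξ)` is strictly increasing on `[0,r₀]` for every unit
`ξ`, and `U` is a C² solution of `U'' - ∇W(U) = -c U'` (`c > 0`) on `(-∞, x₀)` staying
in `B̄(a⁻, r₀)` whose polar radius `ρ(x) = ‖U(x) - a⁻‖` is eventually monotone, then
`U(x) → a⁻` as `x → -∞`. -/
theorem stmt8 {E : Type*} [NormedAddCommGroup E] [InnerProductSpace ℝ E]
    [FiniteDimensional ℝ E]
    (W : E → ℝ) (hW : ContDiff ℝ 1 W) (aminus : E) (r₀ c x₀ : ℝ)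
    (hr₀ : 0 < r₀) (hc : 0 < c)
    (hcrit : ∀ u : E, ‖u - aminus‖ ≤ r₀ → gradient W u = 0 → u = aminus)
    (hmono : ∀ ξ : E, ‖ξ‖ = 1 →
      StrictMonoOn (fun r : ℝ => W (aminus + r • ξ)) (Set.Icc 0 r₀))
    (U : ℝ → E) (hU : ContDiff ℝ 2 U)
    (hODE : ∀ x < x₀, deriv (deriv U) x - gradient W (U x) = -c • deriv U x)
    (hball : ∀ x ≤ x₀, ‖U x - aminus‖ ≤ r₀)
    (hmonot : ∃ x₁ ≤ x₀,
      MonotoneOn (fun x => ‖U x - aminus‖) (Set.Iic x₁) ∨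
        AntitoneOn (fun x => ‖U x - aminus‖) (Set.Iic x₁)) :
    Tendsto U atBot (𝓝 aminus) :=
  stmt8_general W hW aminus r₀ c x₀ hc hcrit hmono U hU hODE hball
end

section
/- Let U = a + ρ n be in polar form with ρ = |U - a|, and suppose U is C² and solves the polar equation ρ'' + c ρ' = ρ|n'|² + ∇W(a + ρn)·n where ∇W(a+ρn)·n ≥ 0 pointwise. Then |U'|² + ρ ∇W(U)·n = ½[(ρ²)'' + c(ρ²)'], and hence for any ξ, ∫_{ξ-1}^{ξ} |U'(x)|² dx ≤ ½[(ρ²)'(ξ) - (ρ²)'(ξ-1)] + (c/2)[ρ²(ξ) - ρ²(ξ-1)]. -/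
open MeasureTheory Real Filter
open scoped Topology RealInnerProductSpace

/-!
Differentiating `U = a + ρ n` gives `U' = ρ' n + ρ n'`, and `n' ⟂ n` because `|n| = 1`, so
`|U'|² = ρ'² + ρ² |n'|²`. Since `(ρ²)'' = 2(ρ'² + ρ ρ'')`, multiplying the polar equation by `ρ`
turns it into the identity. As `ρ ⟪∇W(U), n⟫ ≥ 0`, integrating the identity over `[ξ - 1, ξ]` and
applying the fundamental theorem of calculus to `(ρ²)'` and `ρ²` gives the bound.
-/

section Polar

variable {E : Type*} [NormedAddCommGroup E] [InnerProductSpace ℝ E]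

theorem inner_deriv_eq_zero_of_norm_eq_one {n : ℝ → E} {x : ℝ} (hn : DifferentiableAt ℝ n x)
    (hunit : ∀ t, ‖n t‖ = 1) : ⟪n x, deriv n x⟫ = 0 := by
  have hconst : (fun t => ⟪n t, n t⟫) = fun _ => (1 : ℝ) := by
    funext t
    rw [real_inner_self_eq_norm_sq, hunit, one_pow]
  have h := congrArg (deriv · x) hconst
  simp only [deriv_inner_apply ℝ hn hn, deriv_const] at h
  linarith [real_inner_comm (n x) (deriv n x)]

theorem deriv_const_add_smul {ρ : ℝ → ℝ} {n : ℝ → E} {x : ℝ} (a : E)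
    (hρ : DifferentiableAt ℝ ρ x) (hn : DifferentiableAt ℝ n x) :
    deriv (fun t => a + ρ t • n t) x = deriv ρ x • n x + ρ x • deriv n x := by
  rw [deriv_const_add, deriv_fun_smul hρ hn, add_comm]

theorem norm_deriv_const_add_smul_sq {ρ : ℝ → ℝ} {n : ℝ → E} {x : ℝ} (a : E)
    (hρ : DifferentiableAt ℝ ρ x) (hn : DifferentiableAt ℝ n x) (hunit : ∀ t, ‖n t‖ = 1) :
    ‖deriv (fun t => a + ρ t • n t) x‖ ^ 2 = deriv ρ x ^ 2 + ρ x ^ 2 * ‖deriv n x‖ ^ 2 := by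
  rw [deriv_const_add_smul a hρ hn, norm_add_sq_real, real_inner_smul_left,
    real_inner_smul_right, inner_deriv_eq_zero_of_norm_eq_one hn hunit, norm_smul, norm_smul,
    hunit, norm_eq_abs, norm_eq_abs, mul_pow, mul_pow, sq_abs, sq_abs]
  ring

end Polar

theorem deriv_fun_sq {ρ : ℝ → ℝ} (hρ : Differentiable ℝ ρ) :
    deriv (fun t => ρ t ^ 2) = fun x => 2 * ρ x * deriv ρ x := by
  funext x
  rw [deriv_fun_pow (hρ x), Nat.cast_ofNat, pow_one]

theorem deriv_deriv_fun_sq {ρ : ℝ → ℝ} (hρ : ContDiff ℝ 2 ρ) (x : ℝ) :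
    deriv (deriv (fun t => ρ t ^ 2)) x = 2 * (deriv ρ x ^ 2 + ρ x * deriv (deriv ρ) x) := by
  have hρd : Differentiable ℝ ρ := hρ.differentiable (by norm_num)
  have hρ'd : Differentiable ℝ (deriv ρ) :=
    (hρ.deriv' (n := 1)).differentiable one_ne_zero
  rw [deriv_fun_sq hρd, deriv_fun_mul ((hρd x).const_mul 2) (hρ'd x), deriv_const_mul _ (hρd x)]
  ring

theorem integral_le_of_le_half_deriv_deriv_add_mul_deriv {f g : ℝ → ℝ} {a b c : ℝ} (hab : a ≤ b)
    (hf : IntervalIntegrable f volume a b) (hg : ContDiff ℝ 2 g)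
    (hfg : ∀ x ∈ Set.Icc a b, f x ≤ 1 / 2 * (deriv (deriv g) x + c * deriv g x)) :
    ∫ x in a..b, f x ≤ 1 / 2 * (deriv g b - deriv g a) + c / 2 * (g b - g a) := by
  have hg' : ContDiff ℝ 1 (deriv g) := hg.deriv' (n := 1)
  have hg'' : Continuous (deriv (deriv g)) := hg'.continuous_deriv le_rfl
  have hi'' : IntervalIntegrable (deriv (deriv g)) volume a b := hg''.intervalIntegrable a b
  have hi' : IntervalIntegrable (deriv g) volume a b := hg'.continuous.intervalIntegrable a b
  calc ∫ x in a..b, f x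
      ≤ ∫ x in a..b, 1 / 2 * (deriv (deriv g) x + c * deriv g x) :=
        intervalIntegral.integral_mono_on hab hf ((hi''.add (hi'.const_mul c)).const_mul _)
          hfg
    _ = 1 / 2 * ((∫ x in a..b, deriv (deriv g) x) + c * ∫ x in a..b, deriv g x) := by
      rw [intervalIntegral.integral_const_mul, intervalIntegral.integral_add hi'' (hi'.const_mul c),
        intervalIntegral.integral_const_mul]
    _ = 1 / 2 * (deriv g b - deriv g a) + c / 2 * (g b - g a) := by
      rw [intervalIntegral.integral_deriv_eq_sub (fun x _ => hg'.differentiable one_ne_zero x) hi'',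
        intervalIntegral.integral_deriv_eq_sub
          (fun x _ => hg.differentiable (by norm_num) x) hi']
      ring

theorem stmt9_general {E : Type*} [NormedAddCommGroup E] [InnerProductSpace ℝ E]
    [FiniteDimensional ℝ E]
    (W : E → ℝ) (a : E) (c : ℝ)
    (U : ℝ → E) (ρ : ℝ → ℝ) (n : ℝ → E)
    (hU : ContDiff ℝ 2 U) (hρ : ContDiff ℝ 2 ρ) (hn : ContDiff ℝ 2 n)
    (hpolar : ∀ x : ℝ, U x = a + ρ x • n x)
    (hρpos : ∀ x : ℝ, 0 < ρ x)
    (hnunit : ∀ x : ℝ, ‖n x‖ = 1)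
    (heq : ∀ x : ℝ, deriv (deriv ρ) x + c * deriv ρ x =
      ρ x * ‖deriv n x‖ ^ 2 + ⟪gradient W (a + ρ x • n x), n x⟫)
    (hpos : ∀ x : ℝ, 0 ≤ ⟪gradient W (a + ρ x • n x), n x⟫) :
    (∀ x : ℝ, ‖deriv U x‖ ^ 2 + ρ x * ⟪gradient W (U x), n x⟫ =
      1 / 2 * (deriv (deriv (fun t => ρ t ^ 2)) x +
        c * deriv (fun t => ρ t ^ 2) x)) ∧
    (∀ ξ : ℝ, ∫ x in (ξ - 1)..ξ, ‖deriv U x‖ ^ 2 ≤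
      1 / 2 * (deriv (fun t => ρ t ^ 2) ξ - deriv (fun t => ρ t ^ 2) (ξ - 1)) +
        c / 2 * (ρ ξ ^ 2 - ρ (ξ - 1) ^ 2)) := by
  have hρd : Differentiable ℝ ρ := hρ.differentiable (by norm_num)
  have hnd : Differentiable ℝ n := hn.differentiable (by norm_num)
  have identity : ∀ x, ‖deriv U x‖ ^ 2 + ρ x * ⟪gradient W (U x), n x⟫ =
      1 / 2 * (deriv (deriv (fun t => ρ t ^ 2)) x + c * deriv (fun t => ρ t ^ 2) x) := by
    intro x
    rw [funext hpolar, norm_deriv_const_add_smul_sq a (hρd x) (hnd x) hnunit,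
      deriv_deriv_fun_sq hρ, deriv_fun_sq hρd]
    linear_combination (-ρ x) * heq x
  refine ⟨identity, fun ξ => integral_le_of_le_half_deriv_deriv_add_mul_deriv (by linarith) ?_
    (hρ.pow 2) fun x _ => ?_⟩
  · exact ((hU.continuous_deriv (by norm_num)).norm.pow 2).intervalIntegrable _ _
  · have hgrad_term_nonneg : 0 ≤ ρ x * ⟪gradient W (U x), n x⟫ := by
      rw [hpolar x]
      exact mul_nonneg (hρpos x).le (hpos x)
    linarith [identity x]

/-- The identity `‖U'‖² + ρ ⟪∇W(U), n⟫ = ½[(ρ²)'' + c(ρ²)']` for a C²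
function in polar form `U = a + ρ n` satisfying the polar equation, and the resulting
integral inequality on unit intervals when `⟪∇W(a + ρn), n⟫ ≥ 0`. -/
theorem stmt9 {E : Type*} [NormedAddCommGroup E] [InnerProductSpace ℝ E]
    [FiniteDimensional ℝ E]
    (W : E → ℝ) (hW : ContDiff ℝ 1 W) (a : E) (c : ℝ)
    (U : ℝ → E) (ρ : ℝ → ℝ) (n : ℝ → E)
    (hU : ContDiff ℝ 2 U) (hρ : ContDiff ℝ 2 ρ) (hn : ContDiff ℝ 2 n)
    (hpolar : ∀ x : ℝ, U x = a + ρ x • n x)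
    (hρdef : ∀ x : ℝ, ρ x = ‖U x - a‖)
    (hρpos : ∀ x : ℝ, 0 < ρ x)
    (hnunit : ∀ x : ℝ, ‖n x‖ = 1)
    (heq : ∀ x : ℝ, deriv (deriv ρ) x + c * deriv ρ x =
      ρ x * ‖deriv n x‖ ^ 2 + ⟪gradient W (a + ρ x • n x), n x⟫)
    (hpos : ∀ x : ℝ, 0 ≤ ⟪gradient W (a + ρ x • n x), n x⟫) :
    (∀ x : ℝ, ‖deriv U x‖ ^ 2 + ρ x * ⟪gradient W (U x), n x⟫ =
      1 / 2 * (deriv (deriv (fun t => ρ t ^ 2)) x +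
        c * deriv (fun t => ρ t ^ 2) x)) ∧
    (∀ ξ : ℝ, ∫ x in (ξ - 1)..ξ, ‖deriv U x‖ ^ 2 ≤
      1 / 2 * (deriv (fun t => ρ t ^ 2) ξ - deriv (fun t => ρ t ^ 2) (ξ - 1)) +
        c / 2 * (ρ ξ ^ 2 - ρ (ξ - 1) ^ 2)) :=
  stmt9_general W a c U ρ n hU hρ hn hpolar hρpos hnunit heq hpos
end

section
/- Let ρ : [λ₀, λ₁] → ℝ be C² with ρ'' + c ρ' ≥ w* > 0 on [λ₀, λ₁], c ρ(λ₀) + ρ'(λ₀⁺) ≥ 0, and 0 ≤ ρ ≤ R on [λ₀, λ₁]. Then λ₁ - λ₀ ≤ (1/w*) { cR + [ (cR)² + 2 w* |R - ρ(λ₀)| ]^{1/2} }. -/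
/-!
Since `(ρ' + c ρ)' ≥ w*` and `ρ' + c ρ ≥ 0` at `λ₀`, we get `ρ' + c ρ ≥ w* (λ - λ₀)`, hence
`ρ' ≥ w* (λ - λ₀) - c R`. Integrating once more, `T := λ₁ - λ₀` satisfies
`w* T² / 2 - c R T ≤ ρ(λ₁) - ρ(λ₀) ≤ R - ρ(λ₀)`, and this quadratic inequality bounds `T` by
the larger root of `w* T² / 2 - c R T = R - ρ(λ₀)`.
-/

open Real Set

theorem image_le_of_hasDerivAt_le_hasDerivAt {f f' g g' : ℝ → ℝ} {a b : ℝ} (ha : f a ≤ g a)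
    (hf : ∀ x ∈ Icc a b, HasDerivAt f (f' x) x) (hg : ∀ x ∈ Icc a b, HasDerivAt g (g' x) x)
    (hle : ∀ x ∈ Ico a b, f' x ≤ g' x) : ∀ x ∈ Icc a b, f x ≤ g x :=
  image_le_of_deriv_right_le_deriv_boundary
    (fun x hx ↦ (hf x hx).continuousAt.continuousWithinAt)
    (fun x hx ↦ (hf x (Ico_subset_Icc_self hx)).hasDerivWithinAt) ha
    (fun x hx ↦ (hg x hx).continuousAt.continuousWithinAt)
    (fun x hx ↦ (hg x (Ico_subset_Icc_self hx)).hasDerivWithinAt) hle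

theorem le_one_div_mul_add_sqrt_of_half_mul_sq_sub_le {w k B T : ℝ} (hw : 0 < w)
    (h : w * T ^ 2 / 2 - k * T ≤ B) : T ≤ 1 / w * (k + √(k ^ 2 + 2 * w * B)) := by
  have hsq : (w * T - k) ^ 2 ≤ k ^ 2 + 2 * w * B := by nlinarith
  have hroot : w * T - k ≤ √(k ^ 2 + 2 * w * B) := (le_abs_self _).trans (abs_le_sqrt hsq)
  rw [one_div, ← div_eq_inv_mul, le_div_iff₀ hw]
  linarith

/-- Uniform time bound (analytic content of Lemma 6.6): if `ρ` is C² on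
`[λ₀, λ₁]` with `ρ'' + c ρ' ≥ w* > 0`, `c ρ(λ₀) + ρ'(λ₀) ≥ 0`, and `0 ≤ ρ ≤ R`, then
`λ₁ - λ₀ ≤ (1/w*)(cR + √((cR)² + 2 w* |R - ρ(λ₀)|))`. -/
theorem stmt13 (c wstar R lam₀ lam₁ : ℝ) (ρ ρ' ρ'' : ℝ → ℝ)
    (hc : 0 < c) (hw : 0 < wstar) (hlam : lam₀ ≤ lam₁)
    (hderiv : ∀ x ∈ Set.Icc lam₀ lam₁, HasDerivAt ρ (ρ' x) x)
    (hderiv2 : ∀ x ∈ Set.Icc lam₀ lam₁, HasDerivAt ρ' (ρ'' x) x)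
    (hineq : ∀ x ∈ Set.Icc lam₀ lam₁, wstar ≤ ρ'' x + c * ρ' x)
    (hinit : 0 ≤ c * ρ lam₀ + ρ' lam₀)
    (hbdd : ∀ x ∈ Set.Icc lam₀ lam₁, 0 ≤ ρ x ∧ ρ x ≤ R) :
    lam₁ - lam₀ ≤
      1 / wstar * (c * R + Real.sqrt ((c * R) ^ 2 + 2 * wstar * |R - ρ lam₀|)) := by
  have hfirst : ∀ x ∈ Icc lam₀ lam₁, wstar * (x - lam₀) ≤ ρ' x + c * ρ x :=
    image_le_of_hasDerivAt_le_hasDerivAt (by linarith)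
      (fun x _ ↦ ((hasDerivAt_id x).sub_const lam₀).const_mul wstar |>.congr_deriv (mul_one _))
      (fun x hx ↦ (hderiv2 x hx).add ((hderiv x hx).const_mul c))
      (fun x hx ↦ hineq x (Ico_subset_Icc_self hx))
  have hslope : ∀ x ∈ Ico lam₀ lam₁, wstar * (x - lam₀) - c * R ≤ ρ' x := fun x hx ↦ by
    have hx := Ico_subset_Icc_self hx
    linarith [hfirst x hx, mul_le_mul_of_nonneg_left (hbdd x hx).2 hc.le]
  have hsecond : ∀ x ∈ Icc lam₀ lam₁,
      wstar * (x - lam₀) ^ 2 / 2 - c * R * (x - lam₀) + ρ lam₀ ≤ ρ x := by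
    refine image_le_of_hasDerivAt_le_hasDerivAt (by simp) (fun x _ ↦ ?_) hderiv hslope
    have hlin := (hasDerivAt_id' x).sub_const lam₀
    exact ((((hlin.pow 2).const_mul wstar).div_const 2).sub (hlin.const_mul (c * R))).add_const
      (ρ lam₀) |>.congr_deriv (by ring)
  have hmem₁ : lam₁ ∈ Icc lam₀ lam₁ := right_mem_Icc.2 hlam
  have hR₀ : ρ lam₀ ≤ R := (hbdd lam₀ (left_mem_Icc.2 hlam)).2
  rw [abs_of_nonneg (sub_nonneg.2 hR₀)]
  refine le_one_div_mul_add_sqrt_of_half_mul_sq_sub_le hw ?_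
  linarith [hsecond lam₁ hmem₁, (hbdd lam₁ hmem₁).2]
end

section
/- Let c > 0 and let (U, c) be a solution of U'' - ∇W(U) = -c U' with U(±∞) = a^±, |U| bounded, U'(x_n) → 0 along sequences x_n → ±∞, total weighted energy ∫_ℝ (½|U'|² + W⁺(U)) e^{cx} dx < ∞, and E_c(U) = ∫_ℝ (½|U'|² + W(U)) e^{cx} dx ≥ 0. Then there is no c' with 0 < c' < c such that also E_{c'}(U) ≥ 0 and ∫_ℝ |U'|² e^{c'x} dx > 0. More precisely, for 0 < c' < c one has the identity c' E_{c'}(U) = (c' - c) ∫_ℝ |U'(x)|² e^{c'x} dx, so E_{c'}(U) < 0 whenever U is nonconstant. -/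
/-!
Along a solution of `U'' - ∇W(U) = -c U'` the mechanical energy `g = ½|U'|² - W(U)` dissipates
at rate `g' = -c |U'|²`. Hence `(e^{c'x} g)' = c' e^{c'x} g - c |U'|² e^{c'x}`; when both
`e^{c'x} g` and `|U'|² e^{c'x}` are integrable, the integral of this derivative over `ℝ` vanishes,
which gives `c' ∫ e^{c'x} g = c ∫ |U'|² e^{c'x}`. Writing `e^{c'x} g` as
`|U'|² e^{c'x} - (½|U'|² + W(U)) e^{c'x}` turns this into the identity for `E_{c'}(U)`.
-/

open MeasureTheory Real Filter
open scoped Topology RealInnerProductSpace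

theorem hasDerivAt_mechanicalEnergy {E : Type*} [NormedAddCommGroup E] [InnerProductSpace ℝ E]
    [CompleteSpace E] {W : E → ℝ} (hW : Differentiable ℝ W) {U : ℝ → E}
    (hU : Differentiable ℝ U) (hU' : Differentiable ℝ (deriv U)) {c : ℝ}
    (hODE : ∀ x, deriv (deriv U) x - gradient W (U x) = -c • deriv U x) (x : ℝ) :
    HasDerivAt (fun y => 1 / 2 * ‖deriv U y‖ ^ 2 - W (U y)) (-c * ‖deriv U x‖ ^ 2) x := by
  have hkinetic : HasDerivAt (fun y => ⟪deriv U y, deriv U y⟫)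
      (⟪deriv U x, deriv (deriv U) x⟫ + ⟪deriv (deriv U) x, deriv U x⟫) x :=
    (hU' x).hasDerivAt.inner ℝ (hU' x).hasDerivAt
  have hpotential : HasDerivAt (fun y => W (U y)) ⟪gradient W (U x), deriv U x⟫ x := by
    simpa [InnerProductSpace.toDual_apply_apply, Function.comp_def] using
      (hW (U x)).hasGradientAt.hasFDerivAt.comp_hasDerivAt x (hU x).hasDerivAt
  have hdissipation : ⟪deriv (deriv U) x, deriv U x⟫ - ⟪gradient W (U x), deriv U x⟫ =
      -c * ‖deriv U x‖ ^ 2 := by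
    rw [← inner_sub_left, hODE x, real_inner_smul_left, real_inner_self_eq_norm_sq]
  have h := (hkinetic.const_mul (1 / 2 : ℝ)).sub hpotential
  simp only [real_inner_self_eq_norm_sq] at h
  refine h.congr_deriv ?_
  rw [real_inner_comm (deriv (deriv U) x) (deriv U x), ← hdissipation]
  ring

/-- The boundary terms of the integration by parts vanish because an integrable function with
integrable derivative tends to `0` at `±∞`. -/
theorem mul_integral_exp_mul_eq_of_hasDerivAt {g q : ℝ → ℝ} {c c' : ℝ}
    (hg : ∀ x, HasDerivAt g (-c * q x) x) (hgi : Integrable fun x => exp (c' * x) * g x)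
    (hqi : Integrable fun x => q x * exp (c' * x)) :
    c' * ∫ x, exp (c' * x) * g x = c * ∫ x, q x * exp (c' * x) := by
  have hderiv : ∀ x, HasDerivAt (fun y => exp (c' * y) * g y)
      (c' * (exp (c' * x) * g x) - c * (q x * exp (c' * x))) x := by
    intro x
    have hexp : HasDerivAt (fun y => exp (c' * y)) (exp (c' * x) * c') x := by
      simpa using ((hasDerivAt_id x).const_mul c').exp
    refine (hexp.mul (hg x)).congr_deriv ?_
    ring
  have hzero := integral_eq_zero_of_hasDerivAt_of_integrable hderiv
    ((hgi.const_mul c').sub (hqi.const_mul c)) hgi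
  rw [integral_sub (hgi.const_mul c') (hqi.const_mul c), integral_const_mul,
    integral_const_mul] at hzero
  linarith

theorem stmt14_general {E : Type*} [NormedAddCommGroup E] [InnerProductSpace ℝ E]
    [FiniteDimensional ℝ E]
    (W : E → ℝ) (hW : ContDiff ℝ 2 W)
    (c : ℝ)
    (U : ℝ → E) (hU : ContDiff ℝ 2 U)
    (hODE : ∀ x : ℝ, deriv (deriv U) x - gradient W (U x) = -c • deriv U x) :
    ∀ c' : ℝ, 0 < c' → c' < c →
      Integrable (fun x => (1 / 2 * ‖deriv U x‖ ^ 2 + W (U x)) * exp (c' * x)) →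
      Integrable (fun x => ‖deriv U x‖ ^ 2 * exp (c' * x)) →
      (c' * ∫ x : ℝ, (1 / 2 * ‖deriv U x‖ ^ 2 + W (U x)) * exp (c' * x) =
        (c' - c) * ∫ x : ℝ, ‖deriv U x‖ ^ 2 * exp (c' * x)) ∧
      ((0 < ∫ x : ℝ, ‖deriv U x‖ ^ 2 * exp (c' * x)) →
        ∫ x : ℝ, (1 / 2 * ‖deriv U x‖ ^ 2 + W (U x)) * exp (c' * x) < 0) := by
  intro c' hc' hc'c hEnergy hKinetic
  have hdecomp : (fun x => exp (c' * x) * (1 / 2 * ‖deriv U x‖ ^ 2 - W (U x))) =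
      fun x => ‖deriv U x‖ ^ 2 * exp (c' * x) -
        (1 / 2 * ‖deriv U x‖ ^ 2 + W (U x)) * exp (c' * x) := by
    funext x; ring
  have hweighted := mul_integral_exp_mul_eq_of_hasDerivAt
    (hasDerivAt_mechanicalEnergy (hW.differentiable (by norm_num))
      (hU.differentiable (by norm_num)) (by simpa using hU.differentiable_iteratedDeriv' 1) hODE)
    (hdecomp ▸ hKinetic.sub hEnergy) hKinetic
  rw [hdecomp, integral_sub hKinetic hEnergy] at hweighted
  have hidentity : c' * ∫ x : ℝ, (1 / 2 * ‖deriv U x‖ ^ 2 + W (U x)) * exp (c' * x) =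
      (c' - c) * ∫ x : ℝ, ‖deriv U x‖ ^ 2 * exp (c' * x) := by
    linarith
  refine ⟨hidentity, fun hpos => ?_⟩
  nlinarith [mul_pos (sub_pos.mpr hc'c) hpos]

/-- Uniqueness of the speed of minimizing travelling waves. If `(U,c)`
is a travelling wave with bounded orbit, finite weighted energy, `E_c(U) ≥ 0`, and
`U' → 0` along sequences at `±∞`, then for every `0 < c' < c` one has the identity
`c' E_{c'}(U) = (c' - c) ∫ ‖U'‖² e^{c'x} dx`; in particular `E_{c'}(U) < 0` whenever
`∫ ‖U'‖² e^{c'x} dx > 0` (i.e. `U` nonconstant), so no smaller speed can satisfy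
`E_{c'}(U) ≥ 0`. -/
theorem stmt14 {E : Type*} [NormedAddCommGroup E] [InnerProductSpace ℝ E]
    [FiniteDimensional ℝ E]
    (W : E → ℝ) (hW : ContDiff ℝ 2 W) (aplus aminus : E) (hWaplus : W aplus = 0)
    (c : ℝ) (hc : 0 < c)
    (U : ℝ → E) (hU : ContDiff ℝ 2 U)
    (hODE : ∀ x : ℝ, deriv (deriv U) x - gradient W (U x) = -c • deriv U x)
    (hlimplus : Tendsto U atTop (𝓝 aplus)) (hlimminus : Tendsto U atBot (𝓝 aminus))
    (hbdd : ∃ M : ℝ, ∀ x : ℝ, ‖U x‖ ≤ M)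
    (xs ys : ℕ → ℝ) (hxs : Tendsto xs atTop atTop) (hys : Tendsto ys atTop atBot)
    (hdxs : Tendsto (fun n => deriv U (xs n)) atTop (𝓝 0))
    (hdys : Tendsto (fun n => deriv U (ys n)) atTop (𝓝 0))
    (hEplus : Integrable
      (fun x => (1 / 2 * ‖deriv U x‖ ^ 2 + max (W (U x)) 0) * exp (c * x)))
    (hEcInt : Integrable
      (fun x => (1 / 2 * ‖deriv U x‖ ^ 2 + W (U x)) * exp (c * x)))
    (hEc : 0 ≤ ∫ x : ℝ, (1 / 2 * ‖deriv U x‖ ^ 2 + W (U x)) * exp (c * x)) :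
    ∀ c' : ℝ, 0 < c' → c' < c →
      Integrable (fun x => (1 / 2 * ‖deriv U x‖ ^ 2 + W (U x)) * exp (c' * x)) →
      Integrable (fun x => ‖deriv U x‖ ^ 2 * exp (c' * x)) →
      (c' * ∫ x : ℝ, (1 / 2 * ‖deriv U x‖ ^ 2 + W (U x)) * exp (c' * x) =
        (c' - c) * ∫ x : ℝ, ‖deriv U x‖ ^ 2 * exp (c' * x)) ∧
      ((0 < ∫ x : ℝ, ‖deriv U x‖ ^ 2 * exp (c' * x)) →
        ∫ x : ℝ, (1 / 2 * ‖deriv U x‖ ^ 2 + W (U x)) * exp (c' * x) < 0) :=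
  stmt14_general W hW c U hU hODE
end

section
/- Let c > 0 and U : [ω, ∞) → ℝ^N be a C² solution of U'' - ∇W(U) = -c U' with U(∞) = a⁺, W(a⁺) = 0, U'(x_n) → 0 along some sequence x_n → ∞, and U' ∈ L²([ω,∞), e^{cx}dx)^N. Then for every ω, 0 ≤ (e^{cω}/c)(|U'(ω)|²/2 - W(U(ω))) ≤ ∫_ω^∞ |U'(x)|² e^{cx} dx, and consequently lim_{ω→∞} (e^{cω}/c)(W(U(ω)) - |U'(ω)|²/2) = 0. -/
open MeasureTheory Real Filter
open scoped Topology RealInnerProductSpace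

/-!
Along a solution the energy `e = ‖U'‖²/2 - W(U)` satisfies `e' = -c‖U'‖²`. Since `e → 0` along
`xs`, integrating from `ω` to `∞` gives `e(ω) = c ∫_ω^∞ ‖U'‖²`, which is nonnegative and, as
`e^{cω} ≤ e^{cx}` for `x ≥ ω`, at most `e^{-cω} c ∫_ω^∞ ‖U'‖² e^{cx}`. The limit follows by
squeezing, the tail of the convergent weighted integral tending to `0`.
-/

open Set

section Energy

variable {E : Type*} [NormedAddCommGroup E] [InnerProductSpace ℝ E]

noncomputable def energy (W : E → ℝ) (U : ℝ → E) (x : ℝ) : ℝ := ‖deriv U x‖ ^ 2 / 2 - W (U x)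

theorem tendsto_energy_comp {α : Type*} {l : Filter α} {W : E → ℝ} {U : ℝ → E} {a : E}
    {s : α → ℝ} (hW : ContinuousAt W a) (hWa : W a = 0) (hU : Tendsto (U ∘ s) l (𝓝 a))
    (hU' : Tendsto (deriv U ∘ s) l (𝓝 0)) :
    Tendsto (energy W U ∘ s) l (𝓝 0) := by
  simpa [energy, Function.comp_def, hWa] using
    ((hU'.norm.pow 2).div_const 2).sub (hW.tendsto.comp hU)

variable [CompleteSpace E]

theorem hasDerivAt_energy {W : E → ℝ} {U : ℝ → E} {c x : ℝ}
    (hW : DifferentiableAt ℝ W (U x)) (hU : DifferentiableAt ℝ U x)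
    (hU' : DifferentiableAt ℝ (deriv U) x)
    (hODE : deriv (deriv U) x - gradient W (U x) = -c • deriv U x) :
    HasDerivAt (energy W U) (-(c * ‖deriv U x‖ ^ 2)) x := by
  have hWU : HasDerivAt (fun t => W (U t)) ⟪gradient W (U x), deriv U x⟫ x := by
    simpa only [Function.comp_def, InnerProductSpace.toDual_apply_apply] using
      hW.hasGradientAt.hasFDerivAt.comp_hasDerivAt x hU.hasDerivAt
  have hE : HasDerivAt (energy W U)
      (2 * ⟪deriv U x, deriv (deriv U) x⟫ / 2 - ⟪gradient W (U x), deriv U x⟫) x :=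
    (hU'.hasDerivAt.norm_sq.div_const 2).sub hWU
  convert hE using 1
  have hinner : ⟪deriv U x, deriv (deriv U) x⟫ - ⟪gradient W (U x), deriv U x⟫
      = -(c * ‖deriv U x‖ ^ 2) := by
    rw [real_inner_comm, ← inner_sub_left, hODE, real_inner_smul_left,
      real_inner_self_eq_norm_sq, neg_mul]
  linarith

theorem energy_sub_energy_eq_integral {W : E → ℝ} {U : ℝ → E} {c ω y : ℝ}
    (hW : Differentiable ℝ W) (hU : ContDiff ℝ 2 U) (hωy : ω ≤ y)
    (hODE : ∀ x ∈ Icc ω y, deriv (deriv U) x - gradient W (U x) = -c • deriv U x) :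
    energy W U ω - energy W U y = c * ∫ x in ω..y, ‖deriv U x‖ ^ 2 := by
  have hU' : ContDiff ℝ 1 (deriv U) := hU.iterate_deriv' 1 1
  have hderiv : ∀ x ∈ uIcc ω y, HasDerivAt (energy W U) (-(c * ‖deriv U x‖ ^ 2)) x :=
    fun x hx => hasDerivAt_energy (hW _) (hU.differentiable two_ne_zero x)
      (hU'.differentiable one_ne_zero x) (hODE x (uIcc_of_le hωy ▸ hx))
  have hcont : Continuous fun x => -(c * ‖deriv U x‖ ^ 2) := by
    have := hU'.continuous; fun_prop
  have hFTC := intervalIntegral.integral_eq_sub_of_hasDerivAt hderiv (hcont.intervalIntegrable ω y)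
  rw [intervalIntegral.integral_neg, intervalIntegral.integral_const_mul] at hFTC
  linarith
  
theorem energy_eq_mul_integral_Ioi {α : Type*} {l : Filter α} [l.NeBot]
    [l.IsCountablyGenerated] {W : E → ℝ}
    {U : ℝ → E} {c ω : ℝ} {s : α → ℝ} (hW : Differentiable ℝ W) (hU : ContDiff ℝ 2 U)
    (hODE : ∀ x ∈ Ici ω, deriv (deriv U) x - gradient W (U x) = -c • deriv U x)
    (hint : IntegrableOn (fun x => ‖deriv U x‖ ^ 2) (Ioi ω))
    (hs : Tendsto s l atTop) (hEs : Tendsto (energy W U ∘ s) l (𝓝 0)) :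
    energy W U ω = c * ∫ x in Ioi ω, ‖deriv U x‖ ^ 2 := by
  have hlim : Tendsto (fun i => energy W U ω - energy W U (s i)) l (𝓝 (energy W U ω)) := by
    simpa using hEs.const_sub (energy W U ω)
  refine tendsto_nhds_unique hlim <|
    ((intervalIntegral_tendsto_integral_Ioi ω hint hs).const_mul c).congr' ?_
  filter_upwards [hs.eventually_ge_atTop ω] with i hi
  exact (energy_sub_energy_eq_integral hW hU hi fun x hx => hODE x hx.1).symm

end Energy

theorem integrableOn_Ioi_of_integrableOn_mul_exp {f : ℝ → ℝ} {c ω : ℝ} (hc : 0 ≤ c)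
    (hf : IntegrableOn (fun x => f x * exp (c * x)) (Ioi ω)) : IntegrableOn f (Ioi ω) := by
  have hbdd : ∀ᵐ x ∂volume.restrict (Ioi ω), ‖exp (-(c * x))‖ ≤ exp (-(c * ω)) := by
    refine ae_restrict_of_forall_mem measurableSet_Ioi fun x hx => ?_
    rw [norm_of_nonneg (exp_pos _).le, exp_le_exp, neg_le_neg_iff]
    exact mul_le_mul_of_nonneg_left hx.le hc
  refine IntegrableOn.congr_fun (hf.mul_bdd (by fun_prop) hbdd) (fun x _ => ?_) measurableSet_Ioi
  rw [mul_assoc, ← exp_add, add_neg_cancel, exp_zero, mul_one]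

theorem exp_mul_setIntegral_Ioi_le {f : ℝ → ℝ} {c ω : ℝ} (hc : 0 ≤ c)
    (hf₀ : ∀ x ∈ Ioi ω, 0 ≤ f x) (hf : IntegrableOn (fun x => f x * exp (c * x)) (Ioi ω)) :
    exp (c * ω) * ∫ x in Ioi ω, f x ≤ ∫ x in Ioi ω, f x * exp (c * x) := by
  rw [← integral_const_mul]
  refine setIntegral_mono_on ((integrableOn_Ioi_of_integrableOn_mul_exp hc hf).const_mul _) hf
    measurableSet_Ioi fun x hx => ?_
  rw [mul_comm]
  exact mul_le_mul_of_nonneg_left (exp_le_exp.mpr (mul_le_mul_of_nonneg_left hx.le hc))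
    (hf₀ x hx)

/-- Equipartition limit at `+∞` (Lemma 5.3). For a C² solution of
`U'' - ∇W(U) = -c U'` on `[ω₀, ∞)` with `U(∞) = a⁺`, `W(a⁺) = 0`, `U' → 0` along a
sequence, and `U' ∈ L²(e^{cx}dx)`, one has for every `ω ≥ ω₀`
`0 ≤ (e^{cω}/c)(‖U'(ω)‖²/2 - W(U(ω))) ≤ ∫_ω^∞ ‖U'‖² e^{cx} dx`, and consequently
`(e^{cω}/c)(W(U(ω)) - ‖U'(ω)‖²/2) → 0` as `ω → ∞`. -/
theorem stmt19 {E : Type*} [NormedAddCommGroup E] [InnerProductSpace ℝ E]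
    [FiniteDimensional ℝ E]
    (W : E → ℝ) (hW : ContDiff ℝ 2 W) (aplus : E) (hWaplus : W aplus = 0)
    (c ω₀ : ℝ) (hc : 0 < c)
    (U : ℝ → E) (hU : ContDiff ℝ 2 U)
    (hODE : ∀ x : ℝ, ω₀ ≤ x →
      deriv (deriv U) x - gradient W (U x) = -c • deriv U x)
    (hlim : Tendsto U atTop (𝓝 aplus))
    (xs : ℕ → ℝ) (hxs : Tendsto xs atTop atTop)
    (hdxs : Tendsto (fun n => deriv U (xs n)) atTop (𝓝 0))
    (hL2 : IntegrableOn (fun x => ‖deriv U x‖ ^ 2 * exp (c * x)) (Set.Ici ω₀)) :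
    (∀ ω : ℝ, ω₀ ≤ ω →
      0 ≤ exp (c * ω) / c * (‖deriv U ω‖ ^ 2 / 2 - W (U ω)) ∧
      exp (c * ω) / c * (‖deriv U ω‖ ^ 2 / 2 - W (U ω)) ≤
        ∫ x in Set.Ici ω, ‖deriv U x‖ ^ 2 * exp (c * x)) ∧
    Tendsto (fun ω => exp (c * ω) / c * (W (U ω) - ‖deriv U ω‖ ^ 2 / 2))
      atTop (𝓝 0) := by
  have hE₀ : Tendsto (energy W U ∘ xs) atTop (𝓝 0) :=
    tendsto_energy_comp hW.continuous.continuousAt hWaplus (hlim.comp hxs) hdxs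
  have hbounds : ∀ ω, ω₀ ≤ ω → 0 ≤ exp (c * ω) / c * energy W U ω ∧
      exp (c * ω) / c * energy W U ω ≤ ∫ x in Ici ω, ‖deriv U x‖ ^ 2 * exp (c * x) := by
    intro ω hω
    have hweighted : IntegrableOn (fun x => ‖deriv U x‖ ^ 2 * exp (c * x)) (Ioi ω) :=
      hL2.mono_set (Ioi_subset_Ici hω)
    rw [energy_eq_mul_integral_Ioi (hW.differentiable two_ne_zero) hU
      (fun x hx => hODE x (hω.trans hx))
      (integrableOn_Ioi_of_integrableOn_mul_exp hc.le hweighted) hxs hE₀,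
      div_mul_eq_mul_div, mul_left_comm, mul_div_cancel_left₀ _ hc.ne',
      integral_Ici_eq_integral_Ioi]
    exact ⟨by positivity, exp_mul_setIntegral_Ioi_le hc.le (fun x _ => by positivity) hweighted⟩
  refine ⟨hbounds, ?_⟩
  have hsqueeze := squeeze_zero' ((eventually_ge_atTop ω₀).mono fun ω hω => (hbounds ω hω).1)
    ((eventually_ge_atTop ω₀).mono fun ω hω => (hbounds ω hω).2)
    (tendsto_integral_Ici_zero tendsto_id)
  simpa [energy, ← mul_neg] using hsqueeze.neg
end
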